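/- Let ⟨0⟩ be a C-hyperideal of a commutative multiplicative hyperring G and A a weakly quasi S-primary hyperideal of G that is not a quasi S-primary hyperideal of G. If A is a pure hyperideal of G, then A = ⟨0⟩. -/

import Mathlib

/-! If `A` is weakly quasi `S`-primary but not quasi `S`-primary, then `A ∘ A ⊆ ⟨0⟩`: otherwise
some `a ∘ b` with `a, b ∈ A` misses `⟨0⟩` entirely (C-hyperideal), and a pair `u, v` violating
the quasi `S`-primary condition, necessarily with `0 ∈ u ∘ v`, can be translated by elements of
`A` so that its product becomes `z + a ∘ b` with `z ∈ ⟨0⟩`, which avoids `0`; the weak condition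
then applies, and translating back by elements of `A` does not leave `rad A`. A pure `A` is
contained in `A ∘ A`, hence in `⟨0⟩`. -/

open Set

/-- A commutative multiplicative hyperring: a commutative additive group with a
commutative, associative hyperoperation `hmul` satisfying `(-a)∘b = -(a∘b)`,
weak distributivity, and having an identity element `e` with `a ∈ e∘a`. -/
class MulHyperring (G : Type*) extends AddCommGroup G where
  hmul : G → G → Set G
  hmul_nonempty : ∀ a b : G, (hmul a b).Nonempty
  hmul_comm : ∀ a b : G, hmul a b = hmul b a
  hmul_assoc : ∀ a b c : G, (⋃ x ∈ hmul a b, hmul x c) = ⋃ x ∈ hmul b c, hmul a x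
  neg_hmul : ∀ a b : G, hmul (-a) b = (fun x => -x) '' (hmul a b)
  hmul_add : ∀ a b c : G,
    hmul a (b + c) ⊆ {x | ∃ u ∈ hmul a b, ∃ v ∈ hmul a c, x = u + v}
  e : G
  e_mem : ∀ a : G, a ∈ hmul e a

namespace MulHyperring

variable {G : Type*} [MulHyperring G]

/-- Hyperproduct of an element with a set: `a ∘ B = ⋃ b ∈ B, a ∘ b`. -/
def smulSet (a : G) (B : Set G) : Set G := ⋃ b ∈ B, hmul a b

/-- Hyperproduct of two sets. -/
def setMul (A B : Set G) : Set G := ⋃ a ∈ A, ⋃ b ∈ B, hmul a b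

/-- Hyperproduct `a₁ ∘ a₂ ∘ ⋯ ∘ aₙ` of a (nonempty) list of elements. -/
def hProd : List G → Set G
  | [] => ∅
  | [a] => {a}
  | a :: b :: l => smulSet a (hProd (b :: l))

/-- `aⁿ` as a hyperproduct. -/
def hPow (a : G) (n : ℕ) : Set G := hProd (List.replicate n a)

/-- `A` is a hyperideal of `G`. -/
def IsHyperideal (A : Set G) : Prop :=
  A.Nonempty ∧ (∀ x ∈ A, ∀ y ∈ A, x - y ∈ A) ∧ ∀ r : G, ∀ x ∈ A, hmul r x ⊆ A

/-- `A` is a `C`-hyperideal: any finite hyperproduct meeting `A` is contained in `A`. -/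
def IsCHyperideal (A : Set G) : Prop :=
  IsHyperideal A ∧ ∀ l : List G, l ≠ [] → (hProd l ∩ A).Nonempty → hProd l ⊆ A

/-- The radical of a (C-)hyperideal: `{a | aⁿ ⊆ A for some n ≥ 1}`. -/
def rad (A : Set G) : Set G := {a | ∃ n : ℕ, 1 ≤ n ∧ hPow a n ⊆ A}

/-- The hyperideal generated by a set. -/
def idealGen (X : Set G) : Set G := ⋂₀ {A | IsHyperideal A ∧ X ⊆ A}

/-- The hyperideal product of two hyperideals. -/
def idealMul (A B : Set G) : Set G := idealGen (setMul A B)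

/-- Multiplicative closed subset. -/
def IsMCS (S : Set G) : Prop :=
  e ∈ S ∧ ∀ s₁ ∈ S, ∀ s₂ ∈ S, (hmul s₁ s₂ ∩ S).Nonempty

/-- Prime hyperideal. -/
def IsPrime (P : Set G) : Prop :=
  IsHyperideal P ∧ P ≠ univ ∧ ∀ x y : G, hmul x y ⊆ P → x ∈ P ∨ y ∈ P

/-- `S`-prime hyperideal. -/
def IsSPrime (S A : Set G) : Prop :=
  IsHyperideal A ∧ A ∩ S = ∅ ∧
    ∃ t ∈ S, ∀ u v : G, hmul u v ⊆ A → hmul t u ⊆ A ∨ hmul t v ⊆ A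

/-- `S`-primary hyperideal. -/
def IsSPrimary (S A : Set G) : Prop :=
  IsHyperideal A ∧ A ∩ S = ∅ ∧
    ∃ t ∈ S, ∀ u v : G, hmul u v ⊆ A → hmul t u ⊆ A ∨ hmul t v ⊆ rad A

/-- Quasi `S`-primary hyperideal. -/
def IsQuasiSPrimary (S A : Set G) : Prop :=
  IsHyperideal A ∧ A ∩ S = ∅ ∧
    ∃ t ∈ S, ∀ u v : G, hmul u v ⊆ A → hmul t u ⊆ rad A ∨ hmul t v ⊆ rad A

/-- Weakly quasi `S`-primary hyperideal. -/
def IsWeaklyQuasiSPrimary (S A : Set G) : Prop :=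
  IsHyperideal A ∧ A ∩ S = ∅ ∧
    ∃ t ∈ S, ∀ u v : G, 0 ∉ hmul u v → hmul u v ⊆ A →
      hmul t u ⊆ rad A ∨ hmul t v ⊆ rad A

/-- Strongly quasi `S`-primary hyperideal. -/
def IsStronglyQuasiSPrimary (S A : Set G) : Prop :=
  IsHyperideal A ∧ A ∩ S = ∅ ∧
    ∃ t ∈ S, ∀ u v : G, hmul u v ⊆ A →
      smulSet t (hPow u 2) ⊆ A ∨ hmul t v ⊆ rad A

/-- The residual `(B : x) = {y | y ∘ x ⊆ B}`. -/
def colon (B : Set G) (x : G) : Set G := {y | hmul y x ⊆ B}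

end MulHyperring

open scoped Pointwise

namespace MulHyperring

variable {G : Type*} [MulHyperring G]

lemma hmul_add_subset (a b c : G) : hmul a (b + c) ⊆ hmul a b + hmul a c := by
  intro x hx
  obtain ⟨u, hu, v, hv, rfl⟩ := hmul_add a b c hx
  exact add_mem_add hu hv

lemma add_hmul_subset (a b c : G) : hmul (a + b) c ⊆ hmul a c + hmul b c := by
  simpa only [hmul_comm _ c] using hmul_add_subset c a b

lemma hProd_pair (a b : G) : hProd [a, b] = hmul a b := by
  simp [hProd, smulSet]

lemma hPow_one (a : G) : hPow a 1 = {a} := by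
  simp [hPow, hProd]

lemma hPow_succ {k : ℕ} (hk : 1 ≤ k) (a : G) : hPow a (k + 1) = smulSet a (hPow a k) := by
  obtain ⟨m, rfl⟩ := Nat.exists_eq_add_of_le' hk
  simp [hPow, List.replicate_succ, hProd]

namespace IsHyperideal

variable {A : Set G}

lemma zero_mem (hA : IsHyperideal A) : (0 : G) ∈ A := by
  obtain ⟨⟨x, hx⟩, hsub, -⟩ := hA
  simpa using hsub x hx x hx

lemma neg_mem (hA : IsHyperideal A) {x : G} (hx : x ∈ A) : -x ∈ A := by
  simpa using hA.2.1 0 hA.zero_mem x hx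

lemma add_mem (hA : IsHyperideal A) {x y : G} (hx : x ∈ A) (hy : y ∈ A) :
    x + y ∈ A := by
  simpa using hA.2.1 x hx (-y) (hA.neg_mem hy)

lemma add_subset_self (hA : IsHyperideal A) : A + A ⊆ A := by
  rintro _ ⟨x, hx, y, hy, rfl⟩
  exact hA.add_mem hx hy

lemma hmul_subset (hA : IsHyperideal A) (r : G) {x : G} (hx : x ∈ A) : hmul r x ⊆ A :=
  hA.2.2 r x hx

lemma idealGen_zero_subset (hA : IsHyperideal A) : (idealGen {0} : Set G) ⊆ A :=
  fun _ hx => hx A ⟨hA, singleton_subset_iff.2 hA.zero_mem⟩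

lemma zero_notMem_add (hA : IsHyperideal A) {P : Set G} (hP : Disjoint P A) :
    (0 : G) ∉ A + P := by
  rintro ⟨z, hz, s, hs, hzs⟩
  have hs_neg : s = -z := eq_neg_of_add_eq_zero_right hzs
  exact hP.notMem_of_mem_left hs (hs_neg ▸ hA.neg_mem hz)

lemma hPow_add_subset (hA : IsHyperideal A) {p q : G} (hq : q ∈ A) {k : ℕ} (hk : 1 ≤ k) :
    hPow (p + q) k ⊆ hPow p k + A := by
  induction k, hk using Nat.le_induction with
  | base =>
    rw [hPow_one, hPow_one, singleton_subset_iff]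
    exact add_mem_add rfl hq
  | succ k hk ih =>
    intro w hw
    rw [hPow_succ hk] at hw ⊢
    simp only [smulSet, mem_iUnion] at hw
    obtain ⟨x, hx, hw⟩ := hw
    obtain ⟨y, hy, a, ha, rfl⟩ := ih hx
    obtain ⟨w₁, hw₁, w₂, hw₂, rfl⟩ := hmul_add_subset (p + q) y a hw
    obtain ⟨w₃, hw₃, w₄, hw₄, rfl⟩ := add_hmul_subset p q y hw₁
    show w₃ + w₄ + w₂ ∈ _
    rw [add_assoc]
    refine add_mem_add ?_ (hA.add_mem (hA.hmul_subset y hq (hmul_comm q y ▸ hw₄))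
      (hA.hmul_subset _ ha hw₂))
    simp only [smulSet, mem_iUnion]
    exact ⟨y, hy, hw₃⟩

lemma add_mem_rad (hA : IsHyperideal A) {p q : G} (hp : p ∈ rad A) (hq : q ∈ A) :
    p + q ∈ rad A := by
  obtain ⟨n, hn, hpn⟩ := hp
  exact ⟨n, hn, (hA.hPow_add_subset hq hn).trans
    ((add_subset_add_right hpn).trans hA.add_subset_self)⟩

lemma hmul_subset_rad_of_hmul_add (hA : IsHyperideal A) {t u a : G} (ha : a ∈ A)
    (h : hmul t (u + a) ⊆ rad A) : hmul t u ⊆ rad A := by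
  intro w hw
  rw [← add_neg_cancel_right u a] at hw
  obtain ⟨x, hx, y, hy, rfl⟩ := hmul_add_subset t (u + a) (-a) hw
  exact hA.add_mem_rad (h hx) (hA.hmul_subset t (hA.neg_mem ha) hy)

end IsHyperideal

lemma IsCHyperideal.hmul_subset_of_mem {Z : Set G} (hZ : IsCHyperideal Z) {a b w : G}
    (hw : w ∈ hmul a b) (hwZ : w ∈ Z) : hmul a b ⊆ Z := by
  simpa [hProd_pair] using hZ.2 [a, b] (by simp) ⟨w, by rwa [hProd_pair], hwZ⟩

lemma IsCHyperideal.disjoint_hmul {Z : Set G} (hZ : IsCHyperideal Z) {a b : G}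
    (h : ¬ hmul a b ⊆ Z) : Disjoint (hmul a b) Z :=
  disjoint_left.2 fun _ hw hwZ => h (hZ.hmul_subset_of_mem hw hwZ)

lemma exists_zero_notMem_hmul_add {A Z : Set G} (hA : IsHyperideal A) (hZ : IsCHyperideal Z)
    (hZA : Z ⊆ A) {a b u v : G} (ha : a ∈ A) (hb : b ∈ A) (hab : ¬ hmul a b ⊆ Z)
    (huv : hmul u v ⊆ Z) :
    ∃ a' ∈ A, ∃ b' ∈ A, 0 ∉ hmul (u + a') (v + b') ∧ hmul (u + a') (v + b') ⊆ A := by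
  suffices ∃ a' ∈ A, ∃ b' ∈ A, ∃ c, ∃ d ∈ A, ¬ hmul c d ⊆ Z ∧
      hmul (u + a') (v + b') ⊆ Z + hmul c d by
    obtain ⟨a', ha', b', hb', c, d, hd, hcd, hsub⟩ := this
    exact ⟨a', ha', b', hb', fun h0 => hZ.1.zero_notMem_add (hZ.disjoint_hmul hcd) (hsub h0),
      hsub.trans ((add_subset_add hZA (hA.hmul_subset c hd)).trans hA.add_subset_self)⟩
  by_cases hu : ∃ c ∈ A, ¬ hmul u c ⊆ Z
  · obtain ⟨c, hc, huc⟩ := hu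
    refine ⟨0, hA.zero_mem, c, hc, u, c, hc, huc, ?_⟩
    rw [add_zero]
    exact (hmul_add_subset u v c).trans (add_subset_add_right huv)
  by_cases hv : ∃ c ∈ A, ¬ hmul v c ⊆ Z
  · obtain ⟨c, hc, hvc⟩ := hv
    refine ⟨c, hc, 0, hA.zero_mem, v, c, hc, hvc, ?_⟩
    rw [add_zero, hmul_comm v c]
    exact (add_hmul_subset u c v).trans (add_subset_add_right huv)
  push Not at hu hv
  have hZZ : Z + Z ⊆ Z := hZ.1.add_subset_self
  refine ⟨a, ha, b, hb, a, b, hb, hab, ?_⟩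
  calc hmul (u + a) (v + b) ⊆ hmul (u + a) v + hmul (u + a) b := hmul_add_subset _ _ _
    _ ⊆ (hmul u v + hmul a v) + (hmul u b + hmul a b) :=
      add_subset_add (add_hmul_subset _ _ _) (add_hmul_subset _ _ _)
    _ ⊆ (Z + Z) + (Z + hmul a b) :=
      add_subset_add (add_subset_add huv (hmul_comm a v ▸ hv a ha))
        (add_subset_add_right (hu b hb))
    _ = (Z + Z + Z) + hmul a b := by rw [← add_assoc]
    _ ⊆ Z + hmul a b := add_subset_add_right ((add_subset_add_right hZZ).trans hZZ)

theorem IsWeaklyQuasiSPrimary.hmul_subset_of_not_isQuasiSPrimary {S A Z : Set G}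
    (hw : IsWeaklyQuasiSPrimary S A) (hnq : ¬ IsQuasiSPrimary S A) (hZ : IsCHyperideal Z)
    (hZA : Z ⊆ A) {a b : G} (ha : a ∈ A) (hb : b ∈ A) : hmul a b ⊆ Z := by
  by_contra hab
  obtain ⟨hA, hAS, t, htS, hwq⟩ := hw
  refine hnq ⟨hA, hAS, t, htS, fun u v huv => ?_⟩
  by_cases h0 : (0 : G) ∈ hmul u v
  · obtain ⟨a', ha', b', hb', h0', huv'⟩ :=
      exists_zero_notMem_hmul_add hA hZ hZA ha hb hab (hZ.hmul_subset_of_mem h0 hZ.1.zero_mem)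
    exact (hwq _ _ h0' huv').imp (hA.hmul_subset_rad_of_hmul_add ha')
      (hA.hmul_subset_rad_of_hmul_add hb')
  · exact hwq u v h0 huv

end MulHyperring

open MulHyperring in
theorem weaklyQuasiSPrimary_pure_eq_zero_general {G : Type*} [MulHyperring G] (A S : Set G)
    (h0C : IsCHyperideal (idealGen {0} : Set G))
    (hw : IsWeaklyQuasiSPrimary S A) (hnq : ¬ IsQuasiSPrimary S A)
    (hpure : A = {x ∈ A | ∃ a ∈ A, x ∈ hmul x a}) :
    A = (idealGen {0} : Set G) := by
  have hZA : (idealGen {0} : Set G) ⊆ A := hw.1.idealGen_zero_subset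
  refine Subset.antisymm (fun x hx => ?_) hZA
  obtain ⟨hxA, a, ha, hxa⟩ := hpure.subset hx
  exact hw.hmul_subset_of_not_isQuasiSPrimary hnq h0C hZA hxA ha hxa

open MulHyperring in
theorem weaklyQuasiSPrimary_pure_eq_zero {G : Type*} [MulHyperring G] (A S : Set G)
    (hS : IsMCS S) (h0C : IsCHyperideal (idealGen {0} : Set G))
    (hw : IsWeaklyQuasiSPrimary S A) (hnq : ¬ IsQuasiSPrimary S A)
    (hpure : A = {x ∈ A | ∃ a ∈ A, x ∈ hmul x a}) :
    A = (idealGen {0} : Set G) :=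
  weaklyQuasiSPrimary_pure_eq_zero_general A S h0C hw hnq hpure
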